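/- arXiv:1803.08585 — 6 statements merged into one kernel-verified Lean document; each statement's English description precedes it below -/
import Mathlib

section
/- For the 5-periodic pentagon recurrence X_k X_{k+2} = 1 + X_{k+1} (indices mod 5), the cyclic sum over k in Z/5Z of (1 + X_{k+1}) wedge X_{k+1} vanishes in the exterior square of the multiplicative group: sum_k (1+X_k) wedge X_k = 0 in Lambda^2(F^*) tensor Q. -/
/-! Writing `a ∧ b` for `w a b`, the relation `X_{k-1} X_{k+1} = 1 + X_k` and alternation give
`(1 + X_k) ∧ X_k = X_{k-1} ∧ X_k - X_k ∧ X_{k+1}`, so the cyclic sum telescopes. -/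

theorem Fintype.sum_sub_comp_add_right_eq_zero {G M : Type*} [AddGroup G] [Fintype G]
    [AddCommGroup M] (f : G → M) (a : G) : ∑ k, (f k - f (k + a)) = 0 := by
  rw [Finset.sum_sub_distrib, sub_eq_zero]
  exact (Equiv.sum_comp (Equiv.addRight a) f).symm

theorem wedge_one_add_eq_sub_of_mul_eq {F M : Type*} [Field F] [AddCommGroup M] (w : F → F → M)
    (hmul : ∀ a b c : F, a ≠ 0 → b ≠ 0 → c ≠ 0 → w (a * b) c = w a c + w b c)
    (halt : ∀ a b : F, w a b = - w b a) {a b c : F} (ha : a ≠ 0) (hb : b ≠ 0) (hc : c ≠ 0)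
    (h : a * c = 1 + b) : w (1 + b) b = w a b - w b c := by
  rw [← h, hmul a c b ha hc hb, halt c b, sub_eq_add_neg]

theorem stmt_4_general {F : Type*} [Field F] {M : Type*} [AddCommGroup M]
    (w : F → F → M)
    (hmul₁ : ∀ a b c : F, a ≠ 0 → b ≠ 0 → c ≠ 0 → w (a * b) c = w a c + w b c)
    (halt : ∀ a b : F, w a b = - w b a)
    (X : ZMod 5 → F) (hX0 : ∀ k, X k ≠ 0)
    (hrec : ∀ k, X k * X (k + 2) = 1 + X (k + 1)) :
    ∑ k : ZMod 5, w (1 + X k) (X k) = 0 := by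
  have key : ∀ k, w (1 + X k) (X k) = w (X (k - 1)) (X k) - w (X k) (X (k + 1)) := by
    intro k
    refine wedge_one_add_eq_sub_of_mul_eq w hmul₁ halt (hX0 _) (hX0 _) (hX0 _) ?_
    convert hrec (k - 1) using 3 <;> ring
  simp_rw [key]
  convert Fintype.sum_sub_comp_add_right_eq_zero (fun k => w (X (k - 1)) (X k)) 1 using 3
  rw [add_sub_cancel_right]

/-- For the 5-periodic pentagon recurrence `X_k X_{k+2} = 1 + X_{k+1}` the
cyclic sum `∑_k (1+X_k) ∧ X_k` vanishes in `Λ²(F^×)⊗ℚ`, modeled universally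
by an alternating bimultiplicative map `w` into a `ℚ`-vector space. -/
theorem stmt_4 {F : Type*} [Field F] {M : Type*} [AddCommGroup M] [Module ℚ M]
    (w : F → F → M)
    (hmul₁ : ∀ a b c : F, a ≠ 0 → b ≠ 0 → c ≠ 0 → w (a * b) c = w a c + w b c)
    (hmul₂ : ∀ a b c : F, a ≠ 0 → b ≠ 0 → c ≠ 0 → w a (b * c) = w a b + w a c)
    (halt : ∀ a b : F, w a b = - w b a)
    (X : ZMod 5 → F) (hX0 : ∀ k, X k ≠ 0) (hX1 : ∀ k, 1 + X k ≠ 0)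
    (hrec : ∀ k, X k * X (k + 2) = 1 + X (k + 1)) :
    ∑ k : ZMod 5, w (1 + X k) (X k) = 0 :=
  stmt_4_general w hmul₁ halt X hX0 hrec
end

section
/- For the 5-periodic pentagon recurrence with X_k X_{k+2} = 1 + X_{k+1} (indices mod 5) and seed forms W_k satisfying W_{k+1} - W_k = X_k wedge (X_k + 1), the element W_k - X_{k-1} wedge X_k in Lambda^2 of the multiplicative group (tensored with Q) is independent of k in Z/5Z. -/
/-!
By bimultiplicativity and the recurrence, `X_k ∧ (1 + X_k) = X_k ∧ X_{k-1} + X_k ∧ X_{k+1}`,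
which by antisymmetry is the increment `X_k ∧ X_{k+1} - X_{k-1} ∧ X_k`. So `W_k - X_{k-1} ∧ X_k`
is unchanged by `k ↦ k + 1`, hence constant on the cyclic group `ℤ/5`.
-/

theorem ZMod.apply_eq_of_apply_add_one {n : ℕ} {α : Type*} (G : ZMod n → α)
    (h : ∀ k, G (k + 1) = G k) (k l : ZMod n) : G k = G l := by
  have shift : ∀ m : ℤ, G (k + m) = G k := by
    intro m
    induction m using Int.induction_on with
    | zero => simp
    | succ m ih => rw [Int.cast_add, Int.cast_one, ← add_assoc, h, ih]
    | pred m ih => rw [← ih, Int.cast_sub, Int.cast_one, ← add_sub_assoc, ← h, sub_add_cancel]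
  obtain ⟨m, hm⟩ := ZMod.intCast_surjective (l - k)
  rw [← shift m, hm, add_sub_cancel]

theorem wedge_add_one_eq_of_mul_eq {F M : Type*} [Field F] [AddCommGroup M] (w : F → F → M)
    (hmul₂ : ∀ a b c : F, a ≠ 0 → b ≠ 0 → c ≠ 0 → w a (b * c) = w a b + w a c)
    (halt : ∀ a b : F, w a b = - w b a) {a b c : F} (ha : a ≠ 0) (hb : b ≠ 0) (hc : c ≠ 0)
    (h : b * c = 1 + a) : w a (a + 1) = w a c - w b a := by
  rw [add_comm a 1, ← h, hmul₂ a b c ha hb hc, halt a b, sub_eq_add_neg, add_comm]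

theorem stmt_7_general {F : Type*} [Field F] {M : Type*} [AddCommGroup M]
    (w : F → F → M)
    (hmul₂ : ∀ a b c : F, a ≠ 0 → b ≠ 0 → c ≠ 0 → w a (b * c) = w a b + w a c)
    (halt : ∀ a b : F, w a b = - w b a)
    (X : ZMod 5 → F) (hX0 : ∀ k, X k ≠ 0)
    (hrec : ∀ k, X (k - 1) * X (k + 1) = 1 + X k)
    (W : ZMod 5 → M)
    (hW : ∀ k, W (k + 1) - W k = w (X k) (X k + 1)) :
    ∀ k l : ZMod 5,
      W k - w (X (k - 1)) (X k) = W l - w (X (l - 1)) (X l) := by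
  refine ZMod.apply_eq_of_apply_add_one (fun k => W k - w (X (k - 1)) (X k)) fun k => ?_
  have hsplit := wedge_add_one_eq_of_mul_eq w hmul₂ halt (hX0 k) (hX0 (k - 1)) (hX0 (k + 1))
    (hrec k)
  rw [← hW k] at hsplit
  simp only [add_sub_cancel_right]
  rw [sub_eq_iff_eq_add.mp hsplit]
  abel

/-- For the 5-periodic pentagon recurrence `X_{k-1} X_{k+1} = 1 + X_k` with
seed forms satisfying `W_{k+1} - W_k = X_k ∧ (X_k + 1)`, the element
`W_k - X_{k-1} ∧ X_k` of `Λ²(F^×)⊗ℚ` is independent of `k ∈ ℤ/5`; the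
exterior square is modeled by an alternating bimultiplicative map `w`. -/
theorem stmt_7 {F : Type*} [Field F] {M : Type*} [AddCommGroup M] [Module ℚ M]
    (w : F → F → M)
    (hmul₁ : ∀ a b c : F, a ≠ 0 → b ≠ 0 → c ≠ 0 → w (a * b) c = w a c + w b c)
    (hmul₂ : ∀ a b c : F, a ≠ 0 → b ≠ 0 → c ≠ 0 → w a (b * c) = w a b + w a c)
    (halt : ∀ a b : F, w a b = - w b a)
    (X : ZMod 5 → F) (hX0 : ∀ k, X k ≠ 0)
    (hrec : ∀ k, X (k - 1) * X (k + 1) = 1 + X k)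
    (W : ZMod 5 → M)
    (hW : ∀ k, W (k + 1) - W k = w (X k) (X k + 1)) :
    ∀ k l : ZMod 5,
      W k - w (X (k - 1)) (X k) = W l - w (X (l - 1)) (X l) :=
  stmt_7_general w hmul₂ halt X hX0 hrec W hW
end

section
/- The map delta from the free Q-vector space on F* \ {1} to Lambda^2(F* tensor Q) sending {x} to (1-x) wedge x annihilates the five-term elements: for any five pairwise distinct points x1,...,x5 on P^1(F) in general position, sum_{i=1}^5 (-1)^i (1 - r_i) wedge r_i = 0, where r_i = r(x1,...,hat{x_i},...,x5) is the cross-ratio r(a,b,c,d) = ((a-c)(b-d))/((a-d)(b-c)) of the remaining four points. -/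
/-- The cross-ratio `r(a,b,c,d) = ((a-c)(b-d))/((a-d)(b-c))`. -/
def crossRatio {F : Type*} [Field F] (a b c d : F) : F :=
  ((a - c) * (b - d)) / ((a - d) * (b - c))

set_option linter.unusedSectionVars false
section Aux

variable {F : Type*} [Field F] {M : Type*} [AddCommGroup M] [Module ℚ M]
  (w : F → F → M)

private lemma aux_half {m : M} (h : m + m = 0) : m = 0 := by
  have h2 : (2:ℚ) • m = 0 := by rw [two_smul]; exact h
  have := congrArg (fun z => ((2:ℚ)⁻¹) • z) h2
  simpa [smul_smul] using this

private lemma w_self (halt : ∀ a b : F, w a b = - w b a) (a : F) : w a a = 0 :=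
  aux_half (eq_neg_iff_add_eq_zero.mp (halt a a))

private lemma w_one (hmul₁ : ∀ a b c : F, a ≠ 0 → b ≠ 0 → c ≠ 0 → w (a * b) c = w a c + w b c) (b : F) (hb : b ≠ 0) : w 1 b = 0 := by
  have h := hmul₁ 1 1 b one_ne_zero one_ne_zero hb
  rw [one_mul] at h
  exact left_eq_add.mp h

private lemma w_neg_one (hmul₁ : ∀ a b c : F, a ≠ 0 → b ≠ 0 → c ≠ 0 → w (a * b) c = w a c + w b c) (b : F) (hb : b ≠ 0) : w (-1) b = 0 := by
  have h := hmul₁ (-1) (-1) b (by norm_num) (by norm_num) hb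
  rw [show ((-1 : F) * (-1)) = 1 by ring, w_one w hmul₁ b hb] at h
  exact aux_half h.symm

private lemma w_neg₁ (hmul₁ : ∀ a b c : F, a ≠ 0 → b ≠ 0 → c ≠ 0 → w (a * b) c = w a c + w b c) (a b : F) (ha : a ≠ 0) (hb : b ≠ 0) : w (-a) b = w a b := by
  have h := hmul₁ (-1) a b (by norm_num) ha hb
  rw [neg_one_mul] at h
  rw [h, w_neg_one w hmul₁ b hb, zero_add]

private lemma w_inv₁ (hmul₁ : ∀ a b c : F, a ≠ 0 → b ≠ 0 → c ≠ 0 → w (a * b) c = w a c + w b c) (a b : F) (ha : a ≠ 0) (hb : b ≠ 0) : w a⁻¹ b = - w a b := by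
  have h := hmul₁ a a⁻¹ b ha (inv_ne_zero ha) hb
  rw [mul_inv_cancel₀ ha, w_one w hmul₁ b hb] at h
  exact eq_neg_of_add_eq_zero_right h.symm

private lemma w_inv₂ (hmul₁ : ∀ a b c : F, a ≠ 0 → b ≠ 0 → c ≠ 0 → w (a * b) c = w a c + w b c) (halt : ∀ a b : F, w a b = - w b a) (a b : F) (ha : a ≠ 0) (hb : b ≠ 0) : w a b⁻¹ = - w a b := by
  rw [halt a b⁻¹, w_inv₁ w hmul₁ b a hb ha, halt b a]; simp

private lemma w_div (hmul₁ : ∀ a b c : F, a ≠ 0 → b ≠ 0 → c ≠ 0 → w (a * b) c = w a c + w b c)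
    (hmul₂ : ∀ a b c : F, a ≠ 0 → b ≠ 0 → c ≠ 0 → w a (b * c) = w a b + w a c)
    (halt : ∀ a b : F, w a b = - w b a) : ∀ P Q S : F, P ≠ 0 → Q ≠ 0 → S ≠ 0 →
    w (P / Q) (S / Q) = w P S - w P Q - w Q S := by
  intro P Q S hP hQ hS
  rw [div_eq_mul_inv, div_eq_mul_inv,
    hmul₁ P Q⁻¹ (S * Q⁻¹) hP (inv_ne_zero hQ) (mul_ne_zero hS (inv_ne_zero hQ)),
    hmul₂ P S Q⁻¹ hP hS (inv_ne_zero hQ),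
    hmul₂ Q⁻¹ S Q⁻¹ (inv_ne_zero hQ) hS (inv_ne_zero hQ),
    w_inv₁ w hmul₁ Q S hQ hS, w_inv₂ w hmul₁ halt P Q hP hQ,
    w_inv₁ w hmul₁ Q Q⁻¹ hQ (inv_ne_zero hQ),
    w_inv₂ w hmul₁ halt Q Q hQ hQ, w_self w halt Q]
  abel

private lemma w_mm (hmul₁ : ∀ a b c : F, a ≠ 0 → b ≠ 0 → c ≠ 0 → w (a * b) c = w a c + w b c) (hmul₂ : ∀ a b c : F, a ≠ 0 → b ≠ 0 → c ≠ 0 → w a (b * c) = w a b + w a c) (a b c d : F) (ha : a ≠ 0) (hb : b ≠ 0) (hc : c ≠ 0) (hd : d ≠ 0) :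
    w (a * b) (c * d) = w a c + w a d + w b c + w b d := by
  rw [hmul₁ a b (c * d) ha hb (mul_ne_zero hc hd),
    hmul₂ a c d ha hc hd, hmul₂ b c d hb hc hd]
  abel

private lemma w_term (hmul₁ : ∀ a b c : F, a ≠ 0 → b ≠ 0 → c ≠ 0 → w (a * b) c = w a c + w b c)
    (hmul₂ : ∀ a b c : F, a ≠ 0 → b ≠ 0 → c ≠ 0 → w a (b * c) = w a b + w a c)
    (halt : ∀ a b : F, w a b = - w b a) (a b c d : F) (hab : a - b ≠ 0) (hac : a - c ≠ 0) (had : a - d ≠ 0)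
    (hbc : b - c ≠ 0) (hbd : b - d ≠ 0) (hcd : c - d ≠ 0) :
    w (1 - crossRatio a b c d) (crossRatio a b c d) =
      (w (a-b) (a-c) + w (a-b) (b-d) + w (c-d) (a-c) + w (c-d) (b-d))
      - (w (a-b) (a-d) + w (a-b) (b-c) + w (c-d) (a-d) + w (c-d) (b-c))
      - (w (a-d) (a-c) + w (a-d) (b-d) + w (b-c) (a-c) + w (b-c) (b-d)) := by
  have hdc : d - c ≠ 0 := fun h => hcd (by linear_combination -h)
  have h1 : 1 - crossRatio a b c d = ((a-b) * (d-c)) / ((a-d) * (b-c)) := by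
    unfold crossRatio; field_simp; ring
  have h2 : crossRatio a b c d = ((a-c) * (b-d)) / ((a-d) * (b-c)) := rfl
  rw [h1, h2, w_div w hmul₁ hmul₂ halt _ _ _ (mul_ne_zero hab hdc)
      (mul_ne_zero had hbc) (mul_ne_zero hac hbd),
    w_mm w hmul₁ hmul₂ _ _ _ _ hab hdc hac hbd,
    w_mm w hmul₁ hmul₂ _ _ _ _ hab hdc had hbc,
    w_mm w hmul₁ hmul₂ _ _ _ _ had hbc hac hbd,
    show d - c = -(c - d) by ring,
    w_neg₁ w hmul₁ (c-d) (a-c) hcd hac, w_neg₁ w hmul₁ (c-d) (b-d) hcd hbd,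
    w_neg₁ w hmul₁ (c-d) (a-d) hcd had, w_neg₁ w hmul₁ (c-d) (b-c) hcd hbc]

end Aux

/-- The map `δ : {x} ↦ (1-x) ∧ x` annihilates the five-term elements: for five
pairwise distinct points in general position,
`∑_{i=1}^5 (-1)^i (1 - rᵢ) ∧ rᵢ = 0` in `Λ²(F^×)⊗ℚ`, where `rᵢ` is the
cross-ratio of the four remaining points; `Λ²(F^×)⊗ℚ` is modeled by an
alternating bimultiplicative map `w` into a `ℚ`-vector space. -/
theorem stmt_8 {F : Type*} [Field F] {M : Type*} [AddCommGroup M] [Module ℚ M]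
    (w : F → F → M)
    (hmul₁ : ∀ a b c : F, a ≠ 0 → b ≠ 0 → c ≠ 0 → w (a * b) c = w a c + w b c)
    (hmul₂ : ∀ a b c : F, a ≠ 0 → b ≠ 0 → c ≠ 0 → w a (b * c) = w a b + w a c)
    (halt : ∀ a b : F, w a b = - w b a)
    (x : Fin 5 → F) (hx : Function.Injective x) :
    - w (1 - crossRatio (x 1) (x 2) (x 3) (x 4)) (crossRatio (x 1) (x 2) (x 3) (x 4))
    + w (1 - crossRatio (x 0) (x 2) (x 3) (x 4)) (crossRatio (x 0) (x 2) (x 3) (x 4))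
    - w (1 - crossRatio (x 0) (x 1) (x 3) (x 4)) (crossRatio (x 0) (x 1) (x 3) (x 4))
    + w (1 - crossRatio (x 0) (x 1) (x 2) (x 4)) (crossRatio (x 0) (x 1) (x 2) (x 4))
    - w (1 - crossRatio (x 0) (x 1) (x 2) (x 3)) (crossRatio (x 0) (x 1) (x 2) (x 3))
    = 0 := by
  have hne : ∀ i j : Fin 5, i ≠ j → x i - x j ≠ 0 := fun i j hij =>
    sub_ne_zero.mpr (fun h => hij (hx h))
  have h01 := hne 0 1 (by decide); have h02 := hne 0 2 (by decide)
  have h03 := hne 0 3 (by decide); have h04 := hne 0 4 (by decide)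
  have h12 := hne 1 2 (by decide); have h13 := hne 1 3 (by decide)
  have h14 := hne 1 4 (by decide); have h23 := hne 2 3 (by decide)
  have h24 := hne 2 4 (by decide); have h34 := hne 3 4 (by decide)
  rw [w_term w hmul₁ hmul₂ halt (x 1) (x 2) (x 3) (x 4) h12 h13 h14 h23 h24 h34,
    w_term w hmul₁ hmul₂ halt (x 0) (x 2) (x 3) (x 4) h02 h03 h04 h23 h24 h34,
    w_term w hmul₁ hmul₂ halt (x 0) (x 1) (x 3) (x 4) h01 h03 h04 h13 h14 h34,
    w_term w hmul₁ hmul₂ halt (x 0) (x 1) (x 2) (x 4) h01 h02 h04 h12 h14 h24,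
    w_term w hmul₁ hmul₂ halt (x 0) (x 1) (x 2) (x 3) h01 h02 h03 h12 h13 h23,
    halt (x 0 - x 3) (x 0 - x 2), halt (x 0 - x 4) (x 0 - x 2),
    halt (x 2 - x 3) (x 0 - x 2), halt (x 2 - x 4) (x 0 - x 2),
    halt (x 2 - x 3) (x 1 - x 2), halt (x 2 - x 4) (x 1 - x 2),
    halt (x 1 - x 3) (x 0 - x 3), halt (x 1 - x 4) (x 1 - x 3),
    halt (x 2 - x 4) (x 1 - x 4), halt (x 2 - x 4) (x 0 - x 4)]
  abel
end

section
/- The coproduct formula is consistent for the element {x,y}_{2,1}: applying delta_2 tensor id to delta{x,y}_{2,1} = {(1-y)/(1-x)}_2 tensor (y/x) + {y/x}_2 tensor ((1-y)/(1-x)) + {x}_2 tensor (1-y^{-1}) + {y}_2 tensor (1-x^{-1}), where delta_2{z}_2 = (1-z) wedge z, and then antisymmetrizing the first two tensor factors, yields zero in Lambda^3 of F* tensor Q; that is, the composition B2 tensor F* -> Lambda^3 F* applied to delta{x,y}_{2,1} vanishes for all x,y in F* \ {1} with x != y. -/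
/-!
Put `p = 1 - x`, `q = 1 - y`, `r = y - x`. The arguments of `t` are then `r/p`, `q/p`, `y/x` and,
up to sign, `r/x`, `q/y`, `p/x`; signs are `2`-torsion and die after tensoring with `ℚ`. Since
`(r/p) / (r/x) = x/p`, the first two terms combine into `(x/p) ∧ (q/p) ∧ (y/x)`; expanding it and the
last two terms multiplicatively, the wedges of the letters `x, y, p, q` cancel in pairs.
-/

structure IsSkewTrimul {G M : Type*} [CommGroup G] [AddCommGroup M] (ω : G → G → G → M) :
    Prop where
  map_mul_left : ∀ a b c d, ω (a * b) c d = ω a c d + ω b c d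
  swap₁₂ : ∀ a b c, ω a b c = -ω b a c
  swap₂₃ : ∀ a b c, ω a b c = -ω a c b

namespace IsSkewTrimul

variable {G M : Type*} [CommGroup G] [AddCommGroup M] {ω : G → G → G → M}
  (h : IsSkewTrimul ω)
include h

theorem cycle (a b c : G) : ω a b c = ω c a b := by
  rw [h.swap₂₃, h.swap₁₂ a c, neg_neg]

theorem map_mul_mid (a b c d : G) : ω a (b * c) d = ω a b d + ω a c d := by
  rw [h.swap₁₂, h.map_mul_left, neg_add, ← h.swap₁₂, ← h.swap₁₂]

theorem map_mul_right (a b c d : G) : ω a b (c * d) = ω a b c + ω a b d := by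
  rw [h.cycle a, h.map_mul_left, ← h.cycle a, ← h.cycle a]

theorem map_div_left (a b c d : G) : ω (a / b) c d = ω a c d - ω b c d := by
  rw [eq_sub_iff_add_eq, ← h.map_mul_left, div_mul_cancel]

theorem map_div_mid (a b c d : G) : ω a (b / c) d = ω a b d - ω a c d := by
  rw [eq_sub_iff_add_eq, ← h.map_mul_mid, div_mul_cancel]

theorem map_div_right (a b c d : G) : ω a b (c / d) = ω a b c - ω a b d := by
  rw [eq_sub_iff_add_eq, ← h.map_mul_right, div_mul_cancel]

theorem map_one_left (b c : G) : ω 1 b c = 0 := by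
  simpa using h.map_div_left 1 1 b c

variable [IsAddTorsionFree M]

theorem map_self_left (a c : G) : ω a a c = 0 := by
  rw [← two_nsmul_eq_zero, two_nsmul]
  nth_rw 1 [h.swap₁₂]
  exact neg_add_cancel _

theorem map_self_right (a b : G) : ω a b a = 0 := by
  rw [h.cycle a b a, h.map_self_left]

theorem map_left_eq_zero_of_sq_eq_one {ε : G} (hε : ε ^ 2 = 1) (b c : G) : ω ε b c = 0 := by
  rw [← two_nsmul_eq_zero, two_nsmul, ← h.map_mul_left, ← sq, hε, h.map_one_left]

theorem map_neg_left [HasDistribNeg G] (a b c : G) : ω (-a) b c = ω a b c := by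
  rw [neg_eq_neg_one_mul, h.map_mul_left,
    h.map_left_eq_zero_of_sq_eq_one (by rw [sq, neg_one_mul, neg_neg]), zero_add]

theorem map_neg_right [HasDistribNeg G] (a b c : G) : ω a b (-c) = ω a b c := by
  rw [h.cycle, h.map_neg_left, ← h.cycle]

theorem coproduct_identity (x y p q r : G) :
    ω (r / p) (q / p) (y / x) + ω (r / x) (y / x) (q / p) + ω p x (q / y) + ω q y (p / x) = 0 := by
  have hcombine : ω (r / p) (q / p) (y / x) + ω (r / x) (y / x) (q / p) = ω (x / p) (q / p) (y / x) := by
    rw [h.swap₂₃ (r / x), ← sub_eq_add_neg, ← h.map_div_left, div_div_div_cancel_left]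
  rw [hcombine]
  simp only [h.map_div_left, h.map_div_mid, h.map_div_right, h.map_self_left, h.map_self_right]
  rw [h.cycle q y x, h.swap₁₂ p x y, h.cycle q y p, h.swap₂₃ p x q]
  abel

end IsSkewTrimul

/-- `Λ³(F^×) ⊗ ℚ` is modelled through its universal property, by an arbitrary alternating
trimultiplicative map `t` into a `ℚ`-vector space. -/
theorem stmt_12_general {F : Type*} [Field F] {M : Type*} [AddCommGroup M] [Module ℚ M]
    (t : F → F → F → M)
    (hmul₁ : ∀ a b c d : F, a ≠ 0 → b ≠ 0 → c ≠ 0 → d ≠ 0 →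
      t (a * b) c d = t a c d + t b c d)
    (halt₁ : ∀ a b c : F, t a b c = - t b a c)
    (halt₂ : ∀ a b c : F, t a b c = - t a c b)
    (x y : F) (hx0 : x ≠ 0) (hx1 : x ≠ 1) (hy0 : y ≠ 0) (hy1 : y ≠ 1)
    (hxy : x ≠ y) :
    t (1 - (1 - y) / (1 - x)) ((1 - y) / (1 - x)) (y / x)
    + t (1 - y / x) (y / x) ((1 - y) / (1 - x))
    + t (1 - x) x (1 - y⁻¹)
    + t (1 - y) y (1 - x⁻¹)
    = 0 := by
  have := IsAddTorsionFree.of_module_rat M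
  have hω : IsSkewTrimul fun a b c : Fˣ ↦ t a b c :=
    ⟨fun a b c d ↦ by simpa using hmul₁ a b c d a.ne_zero b.ne_zero c.ne_zero d.ne_zero,
      fun a b c ↦ halt₁ a b c, fun a b c ↦ halt₂ a b c⟩
  set X := Units.mk0 x hx0
  set Y := Units.mk0 y hy0
  set P := Units.mk0 (1 - x) (sub_ne_zero.2 hx1.symm)
  set Q := Units.mk0 (1 - y) (sub_ne_zero.2 hy1.symm)
  set R := Units.mk0 (y - x) (sub_ne_zero.2 hxy.symm)
  have e₁ : 1 - (1 - y) / (1 - x) = ((R / P : Fˣ) : F) := by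
    simp [R, P]; field_simp; ring
  have e₂ : 1 - y / x = ((-(R / X) : Fˣ) : F) := by
    simp [R, X]; field_simp; ring
  have e₃ : 1 - y⁻¹ = ((-(Q / Y) : Fˣ) : F) := by
    simp [Q, Y]; field_simp; ring
  have e₄ : 1 - x⁻¹ = ((-(P / X) : Fˣ) : F) := by
    simp [P, X]; field_simp; ring
  have e₅ : (1 - y) / (1 - x) = ((Q / P : Fˣ) : F) := by simp [Q, P]
  have e₆ : y / x = ((Y / X : Fˣ) : F) := by simp [Y, X]
  have hsum := hω.coproduct_identity X Y P Q R
  rw [← hω.map_neg_left (R / X), ← hω.map_neg_right P X, ← hω.map_neg_right Q Y] at hsum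
  rw [e₁, e₂, e₃, e₄, e₅, e₆]
  exact hsum

/-- Consistency of the coproduct of `{x,y}_{2,1}`: applying `δ₂ ⊗ id` (with
`δ₂{z}₂ = (1-z) ∧ z`) to the four-term coproduct formula yields zero in
`Λ³(F^×)⊗ℚ`, modeled by an arbitrary alternating trimultiplicative map `t`
into a `ℚ`-vector space. -/
theorem stmt_12 {F : Type*} [Field F] {M : Type*} [AddCommGroup M] [Module ℚ M]
    (t : F → F → F → M)
    (hmul₁ : ∀ a b c d : F, a ≠ 0 → b ≠ 0 → c ≠ 0 → d ≠ 0 →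
      t (a * b) c d = t a c d + t b c d)
    (hmul₂ : ∀ a b c d : F, a ≠ 0 → b ≠ 0 → c ≠ 0 → d ≠ 0 →
      t a (b * c) d = t a b d + t a c d)
    (hmul₃ : ∀ a b c d : F, a ≠ 0 → b ≠ 0 → c ≠ 0 → d ≠ 0 →
      t a b (c * d) = t a b c + t a b d)
    (halt₁ : ∀ a b c : F, t a b c = - t b a c)
    (halt₂ : ∀ a b c : F, t a b c = - t a c b)
    (x y : F) (hx0 : x ≠ 0) (hx1 : x ≠ 1) (hy0 : y ≠ 0) (hy1 : y ≠ 1)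
    (hxy : x ≠ y) :
    t (1 - (1 - y) / (1 - x)) ((1 - y) / (1 - x)) (y / x)
    + t (1 - y / x) (y / x) ((1 - y) / (1 - x))
    + t (1 - x) x (1 - y⁻¹)
    + t (1 - y) y (1 - x⁻¹)
    = 0 :=
  stmt_12_general t hmul₁ halt₁ halt₂ x y hx0 hx1 hy0 hy1 hxy
end

section
/- In the space of formal symbols: define, for x in F \ {0,1}, delta{x}_3 = {x}_2 tensor x, and for x,y distinct in F \ {0,1} define delta{x,y}_{2,1} by the four-term formula. Then the element {x,y}_{2,1} - ({1-x^{-1}}_3 + {1-y^{-1}}_3 + {(1-y)/(1-x)}_3 - {(1-y^{-1})/(1-x^{-1})}_3 + {y/x}_3) has coproduct mapping to zero in B2(F) tensor F* modulo the five-term relations; concretely, the expression delta{x,y}_{2,1} - [ {1-x^{-1}}_2 tensor (1-x^{-1}) + {1-y^{-1}}_2 tensor (1-y^{-1}) + {(1-y)/(1-x)}_2 tensor ((1-y)/(1-x)) - {(1-y^{-1})/(1-x^{-1})}_2 tensor ((1-y^{-1})/(1-x^{-1})) + {y/x}_2 tensor (y/x) ] lies in the subspace R2(F) tensor F* + Z[F]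 tensor {torsion}, i.e. vanishes in B2(F) tensor (F* tensor Q). -/
section CrossRatio

variable {F : Type*} [Field F]

theorem crossRatio_inv_sub {w a b c d : F} (ha : a ≠ w) (hb : b ≠ w) (hc : c ≠ w) (hd : d ≠ w) :
    crossRatio (a - w)⁻¹ (b - w)⁻¹ (c - w)⁻¹ (d - w)⁻¹ = crossRatio a b c d := by
  have ha' := sub_ne_zero.mpr ha
  have hb' := sub_ne_zero.mpr hb
  have hc' := sub_ne_zero.mpr hc
  have hd' := sub_ne_zero.mpr hd
  rw [crossRatio, crossRatio, inv_sub_inv ha' hc', inv_sub_inv hb' hd', inv_sub_inv ha' hd',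
    inv_sub_inv hb' hc', div_mul_div_comm, div_mul_div_comm,
    show (a - w) * (d - w) * ((b - w) * (c - w)) = (a - w) * (c - w) * ((b - w) * (d - w)) by ring,
    div_div_div_cancel_right₀ (by positivity)]
  simp only [sub_sub_sub_cancel_right, ← neg_sub a, ← neg_sub b, neg_mul_neg]

/-- `0` is the image of `∞` under `t ↦ (t - w)⁻¹`, and `r(∞, b, c, d) = (b - d) / (b - c)`. -/
theorem crossRatio_zero_inv_sub {w b c d : F} (hb : b ≠ w) (hc : c ≠ w) (hd : d ≠ w) :
    crossRatio 0 (b - w)⁻¹ (c - w)⁻¹ (d - w)⁻¹ = (b - d) / (b - c) := by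
  rcases eq_or_ne b c with rfl | hbc
  · simp [crossRatio]
  have := sub_ne_zero.mpr hbc
  have := sub_ne_zero.mpr hbc.symm
  have := sub_ne_zero.mpr hb
  have := sub_ne_zero.mpr hc
  have := sub_ne_zero.mpr hd
  unfold crossRatio
  field_simp
  simp only [sub_sub_sub_cancel_right]
  field_simp
  ring

end CrossRatio

section Multiplicative

variable {F : Type*} [Field F] {M : Type*} [AddCommGroup M] {g : F → M}

theorem map_div_of_map_mul (hg : ∀ a b : F, a ≠ 0 → b ≠ 0 → g (a * b) = g a + g b) {a b : F}
    (ha : a ≠ 0) (hb : b ≠ 0) : g (a / b) = g a - g b := by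
  rw [eq_sub_iff_add_eq, ← hg _ _ (div_ne_zero ha hb) hb, div_mul_cancel₀ a hb]

theorem eq_zero_of_map_mul_of_finite [Finite F] [Module ℚ M]
    (hg : ∀ a b : F, a ≠ 0 → b ≠ 0 → g (a * b) = g a + g b) {b : F} (hb : b ≠ 0) : g b = 0 := by
  have hone : g 1 = 0 := by
    simpa using hg 1 1 one_ne_zero one_ne_zero
  have hpow : ∀ n : ℕ, g (b ^ n) = n • g b := by
    intro n
    induction n with
    | zero => rw [pow_zero, hone, zero_smul]
    | succ n ih => rw [pow_succ, hg _ _ (pow_ne_zero n hb) hb, ih, succ_nsmul]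
  let u := Units.mk0 b hb
  have hn : (orderOf u • g b : M) = 0 := by
    rw [← hpow, ← Units.val_mk0 hb, ← Units.val_pow_eq_pow_val, pow_orderOf_eq_one,
      Units.val_one, hone]
  rw [← Nat.cast_smul_eq_nsmul ℚ] at hn
  exact (smul_eq_zero.mp hn).resolve_left (Nat.cast_ne_zero.mpr (orderOf_pos u).ne')

end Multiplicative

section FiveTerm

variable {F : Type*} [Field F] {M : Type*} [AddCommGroup M]

def SatisfiesFiveTerm (f : F → M) : Prop :=
  ∀ x1 x2 x3 x4 x5 : F, Function.Injective ![x1, x2, x3, x4, x5] →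
    - f (crossRatio x2 x3 x4 x5) + f (crossRatio x1 x3 x4 x5)
    - f (crossRatio x1 x2 x4 x5) + f (crossRatio x1 x2 x3 x5)
    - f (crossRatio x1 x2 x3 x4) = 0

namespace SatisfiesFiveTerm

variable {f : F → M}

/-- The five-term relation for the points `∞, p, q, r, s`. -/
theorem infty (hf : SatisfiesFiveTerm f) {w p q r s : F}
    (h : Function.Injective ![w, p, q, r, s]) :
    - f (crossRatio p q r s) + f ((q - s) / (q - r)) - f ((p - s) / (p - r))
      + f ((p - s) / (p - q)) - f ((p - r) / (p - q)) = 0 := by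
  have hφ : Function.Injective fun t : F => (t - w)⁻¹ := inv_injective.comp sub_left_injective
  have himage : Function.Injective ![(w - w)⁻¹, (p - w)⁻¹, (q - w)⁻¹, (r - w)⁻¹, (s - w)⁻¹] := by
    rw [← List.nodup_ofFn] at h ⊢
    simpa using h.map hφ
  have hp : p ≠ w := h.ne (by decide : (1 : Fin 5) ≠ 0)
  have hq : q ≠ w := h.ne (by decide : (2 : Fin 5) ≠ 0)
  have hr : r ≠ w := h.ne (by decide : (3 : Fin 5) ≠ 0)
  have hs : s ≠ w := h.ne (by decide : (4 : Fin 5) ≠ 0)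
  have H := hf _ _ _ _ _ himage
  rwa [sub_self, inv_zero, crossRatio_inv_sub hp hq hr hs, crossRatio_zero_inv_sub hq hr hs,
    crossRatio_zero_inv_sub hp hr hs, crossRatio_zero_inv_sub hp hq hs,
    crossRatio_zero_inv_sub hp hq hr] at H

/-- The five-term relation for the points `∞, 0, 1, u, v`. -/
theorem five_term [Infinite F] (hf : SatisfiesFiveTerm f) {u v : F} (hu0 : u ≠ 0) (hu1 : u ≠ 1)
    (hv0 : v ≠ 0) (hv1 : v ≠ 1) (huv : u ≠ v) :
    f u - f v + f (v / u) - f ((1 - v) / (1 - u)) + f ((1 - v⁻¹) / (1 - u⁻¹)) = 0 := by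
  classical
  obtain ⟨w, hw⟩ := Infinite.exists_notMem_finset ({0, 1, u, v} : Finset F)
  simp only [Finset.mem_insert, Finset.mem_singleton, not_or] at hw
  obtain ⟨hw0, hw1, hwu, hwv⟩ := hw
  have hinj : Function.Injective ![w, 0, 1, u, v] := by
    rw [← List.nodup_ofFn]
    simp [hw0, hw1, hwu, hwv, huv, hu0.symm, hu1.symm, hv0.symm, hv1.symm]
  have hcr : crossRatio 0 1 u v = (1 - v⁻¹) / (1 - u⁻¹) := by
    have := sub_ne_zero.mpr hu1
    have := sub_ne_zero.mpr hu1.symm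
    unfold crossRatio
    field_simp
    ring
  have H := hf.infty hinj
  simp only [hcr, zero_sub, neg_div_neg_eq, div_one] at H
  linear_combination (norm := module) -H

-- The relations at `(u, v)`, `(v, u)`, `(u⁻¹, v⁻¹)` and `(v⁻¹, u⁻¹)` add up to twice this one.
theorem apply_div_add_apply_div [Infinite F] [Module ℚ M] (hf : SatisfiesFiveTerm f) {u v : F}
    (hu0 : u ≠ 0) (hu1 : u ≠ 1) (hv0 : v ≠ 0) (hv1 : v ≠ 1) (huv : u ≠ v) :
    f (v / u) + f (u / v) = 0 := by
  have h1 := hf.five_term hu0 hu1 hv0 hv1 huv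
  have h2 := hf.five_term hv0 hv1 hu0 hu1 huv.symm
  have h3 := hf.five_term (inv_ne_zero hu0) (inv_ne_one.mpr hu1) (inv_ne_zero hv0)
    (inv_ne_one.mpr hv1) (inv_injective.ne huv)
  have h4 := hf.five_term (inv_ne_zero hv0) (inv_ne_one.mpr hv1) (inv_ne_zero hu0)
    (inv_ne_one.mpr hu1) (inv_injective.ne huv.symm)
  rw [inv_inv, inv_inv, inv_div_inv] at h3 h4
  have h : (2 : ℚ) • (f (v / u) + f (u / v)) = 0 := by
    linear_combination (norm := module) h1 + h2 + h3 + h4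
  exact (smul_eq_zero.mp h).resolve_left two_ne_zero

theorem apply_inv [Infinite F] [Module ℚ M] (hf : SatisfiesFiveTerm f) {z : F} (hz0 : z ≠ 0)
    (hz1 : z ≠ 1) : f z⁻¹ = -f z := by
  classical
  obtain ⟨u, hu⟩ := Infinite.exists_notMem_finset ({0, 1, z⁻¹} : Finset F)
  simp only [Finset.mem_insert, Finset.mem_singleton, not_or] at hu
  obtain ⟨hu0, hu1, huz⟩ := hu
  have hzu1 : z * u ≠ 1 := fun h => huz (eq_inv_of_mul_eq_one_right h)
  have huzu : u ≠ z * u := fun h => hz1 (by simpa [hu0] using h.symm)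
  have h := hf.apply_div_add_apply_div hu0 hu1 (mul_ne_zero hz0 hu0) hzu1 huzu
  rw [mul_div_cancel_right₀ z hu0, div_mul_cancel_right₀ hu0] at h
  exact eq_neg_of_add_eq_zero_right h

theorem apply_add_apply_one_sub [Infinite F] [Module ℚ M] (hf : SatisfiesFiveTerm f) {u v : F}
    (hu0 : u ≠ 0) (hu1 : u ≠ 1) (hv0 : v ≠ 0) (hv1 : v ≠ 1) :
    f u + f (1 - u) = f v + f (1 - v) := by
  rcases eq_or_ne u v with rfl | huv
  · rfl
  have h1 := hf.five_term hu0 hu1 hv0 hv1 huv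
  have h2 := hf.five_term (sub_ne_zero.mpr hu1.symm) (sub_eq_self.not.mpr hu0)
    (sub_ne_zero.mpr hv1.symm) (sub_eq_self.not.mpr hv0) (sub_right_injective.ne huv)
  have hu' : 1 - u⁻¹ ≠ 0 := sub_ne_zero.mpr (inv_ne_one.mpr hu1).symm
  have hv' : 1 - v⁻¹ ≠ 0 := sub_ne_zero.mpr (inv_ne_one.mpr hv1).symm
  have hX : (1 - (1 - v)⁻¹) / (1 - (1 - u)⁻¹) = ((1 - v⁻¹) / (1 - u⁻¹))⁻¹ := by
    have := sub_ne_zero.mpr hu1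
    have := sub_ne_zero.mpr hv1
    have := sub_ne_zero.mpr hu1.symm
    have := sub_ne_zero.mpr hv1.symm
    field_simp
    rw [sub_sub_cancel_left, sub_sub_cancel_left]
    field_simp
    ring
  have hX1 : (1 - v⁻¹) / (1 - u⁻¹) ≠ 1 := fun h =>
    huv (inv_injective (sub_right_injective ((div_eq_one_iff_eq hu').mp h)).symm)
  rw [sub_sub_cancel, sub_sub_cancel, hX, hf.apply_inv (div_ne_zero hv' hu') hX1] at h2
  linear_combination (norm := module) h1 + h2

-- `f (1 - t⁻¹) - f t = f (1 - t⁻¹) + f t⁻¹` does not depend on `t`, and `t ↦ 1 - t⁻¹` has order 3.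
theorem apply_one_sub_inv [Infinite F] [Module ℚ M] (hf : SatisfiesFiveTerm f) {z : F}
    (hz0 : z ≠ 0) (hz1 : z ≠ 1) : f (1 - z⁻¹) = f z := by
  have step : ∀ t : F, t ≠ 0 → t ≠ 1 → f (1 - t⁻¹) - f t = f (1 - z⁻¹) - f z := by
    intro t ht0 ht1
    have h := hf.apply_add_apply_one_sub (inv_ne_zero ht0) (inv_ne_one.mpr ht1) (inv_ne_zero hz0)
      (inv_ne_one.mpr hz1)
    rw [hf.apply_inv ht0 ht1, hf.apply_inv hz0 hz1] at h
    linear_combination (norm := module) h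
  have hz' : 1 - z ≠ 0 := sub_ne_zero.mpr hz1.symm
  have h2 := step (1 - z⁻¹) (sub_ne_zero.mpr (inv_ne_one.mpr hz1).symm)
    (sub_eq_self.not.mpr (inv_ne_zero hz0))
  have h3 := step (1 - z)⁻¹ (inv_ne_zero hz') (inv_ne_one.mpr (sub_eq_self.not.mpr hz0))
  have hcycle : 1 - (1 - z⁻¹)⁻¹ = (1 - z)⁻¹ := by
    have := sub_ne_zero.mpr hz1
    field_simp
    ring
  rw [hcycle] at h2
  rw [inv_inv, sub_sub_cancel] at h3
  have h : (3 : ℚ) • (f (1 - z⁻¹) - f z) = 0 := by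
    linear_combination (norm := module) -h2 - h3
  exact sub_eq_zero.mp ((smul_eq_zero.mp h).resolve_left three_ne_zero)

end SatisfiesFiveTerm

end FiveTerm

/-- `c z b` stands for `{z}₂ ⊗ b` in `B₂(F) ⊗ (F^× ⊗ ℚ)`, modelled universally: `c` is only
assumed multiplicative in `b` and to kill the five-term relations in `z`. -/
theorem stmt_13_general {F : Type*} [Field F] {M : Type*} [AddCommGroup M] [Module ℚ M]
    (c : F → F → M)
    (hcmul : ∀ z a b : F, a ≠ 0 → b ≠ 0 → c z (a * b) = c z a + c z b)
    (h5 : ∀ x1 x2 x3 x4 x5 : F, Function.Injective ![x1, x2, x3, x4, x5] →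
      ∀ b : F, b ≠ 0 →
        - c (crossRatio x2 x3 x4 x5) b + c (crossRatio x1 x3 x4 x5) b
        - c (crossRatio x1 x2 x4 x5) b + c (crossRatio x1 x2 x3 x5) b
        - c (crossRatio x1 x2 x3 x4) b = 0)
    (x y : F) (hx0 : x ≠ 0) (hx1 : x ≠ 1) (hy0 : y ≠ 0) (hy1 : y ≠ 1)
    (hxy : x ≠ y)
    (ha10 : 1 - x⁻¹ ≠ 0)
    (ha20 : 1 - y⁻¹ ≠ 0)
    (ha30 : (1 - y) / (1 - x) ≠ 0)
    (ha40 : (1 - y⁻¹) / (1 - x⁻¹) ≠ 0)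
    (ha50 : y / x ≠ 0) :
    (c ((1 - y) / (1 - x)) (y / x) + c (y / x) ((1 - y) / (1 - x))
      + c x (1 - y⁻¹) + c y (1 - x⁻¹))
    - (c (1 - x⁻¹) (1 - x⁻¹) + c (1 - y⁻¹) (1 - y⁻¹)
      + c ((1 - y) / (1 - x)) ((1 - y) / (1 - x))
      - c ((1 - y⁻¹) / (1 - x⁻¹)) ((1 - y⁻¹) / (1 - x⁻¹))
      + c (y / x) (y / x))
    = 0 := by
  rcases finite_or_infinite F with hfin | hinf
  · have h0 : ∀ b : F, b ≠ 0 → ∀ z, c z b = 0 := fun b hb z => eq_zero_of_map_mul_of_finite (hcmul z) hb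
    simp [h0 _ ha10, h0 _ ha20, h0 _ ha30, h0 _ ha40, h0 _ ha50]
  have hf : ∀ b : F, b ≠ 0 → SatisfiesFiveTerm (c · b) :=
    fun b hb x1 x2 x3 x4 x5 h => h5 x1 x2 x3 x4 x5 h b hb
  have hx_refl : c (1 - x⁻¹) (1 - x⁻¹) = c x (1 - x⁻¹) := (hf _ ha10).apply_one_sub_inv hx0 hx1
  have hy_refl : c (1 - y⁻¹) (1 - y⁻¹) = c y (1 - y⁻¹) := (hf _ ha20).apply_one_sub_inv hy0 hy1
  have hfive := (hf _ ha40).five_term hx0 hx1 hy0 hy1 hxy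
  beta_reduce at hfive
  have ha4 : (1 - y⁻¹) / (1 - x⁻¹) = (1 - y) / (1 - x) / (y / x) := by
    have := sub_ne_zero.mpr hx1
    have := sub_ne_zero.mpr hx1.symm
    field_simp
    ring
  have hx_div := map_div_of_map_mul (hcmul x) ha20 ha10
  have hy_div := map_div_of_map_mul (hcmul y) ha20 ha10
  have ha3_div := map_div_of_map_mul (hcmul ((1 - y) / (1 - x))) ha30 ha50
  have ha5_div := map_div_of_map_mul (hcmul (y / x)) ha30 ha50
  rw [← ha4] at ha3_div ha5_div
  linear_combination (norm := module)
    -hx_refl - hy_refl - hx_div + hy_div + hfive + ha3_div - ha5_div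

/-- In `B₂(F) ⊗ (F^× ⊗ ℚ)` — modeled universally by a map `c` which kills
`{0}₂, {1}₂`, is multiplicative in the second slot, and kills the five-term
relations in the first slot — the coproduct `δ{x,y}_{2,1}` agrees with the
coproduct of
`{1-x⁻¹}₃ + {1-y⁻¹}₃ + {(1-y)/(1-x)}₃ - {(1-y⁻¹)/(1-x⁻¹)}₃ + {y/x}₃`,
where `δ{z}₃ = {z}₂ ⊗ z`. -/
theorem stmt_13 {F : Type*} [Field F] {M : Type*} [AddCommGroup M] [Module ℚ M]
    (c : F → F → M)
    (hc0 : ∀ b, c 0 b = 0) (hc1 : ∀ b, c 1 b = 0)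
    (hcmul : ∀ z a b : F, a ≠ 0 → b ≠ 0 → c z (a * b) = c z a + c z b)
    (h5 : ∀ x1 x2 x3 x4 x5 : F, Function.Injective ![x1, x2, x3, x4, x5] →
      ∀ b : F, b ≠ 0 →
        - c (crossRatio x2 x3 x4 x5) b + c (crossRatio x1 x3 x4 x5) b
        - c (crossRatio x1 x2 x4 x5) b + c (crossRatio x1 x2 x3 x5) b
        - c (crossRatio x1 x2 x3 x4) b = 0)
    (x y : F) (hx0 : x ≠ 0) (hx1 : x ≠ 1) (hy0 : y ≠ 0) (hy1 : y ≠ 1)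
    (hxy : x ≠ y)
    (ha10 : 1 - x⁻¹ ≠ 0) (ha11 : 1 - x⁻¹ ≠ 1)
    (ha20 : 1 - y⁻¹ ≠ 0) (ha21 : 1 - y⁻¹ ≠ 1)
    (ha30 : (1 - y) / (1 - x) ≠ 0) (ha31 : (1 - y) / (1 - x) ≠ 1)
    (ha40 : (1 - y⁻¹) / (1 - x⁻¹) ≠ 0) (ha41 : (1 - y⁻¹) / (1 - x⁻¹) ≠ 1)
    (ha50 : y / x ≠ 0) (ha51 : y / x ≠ 1) :
    (c ((1 - y) / (1 - x)) (y / x) + c (y / x) ((1 - y) / (1 - x))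
      + c x (1 - y⁻¹) + c y (1 - x⁻¹))
    - (c (1 - x⁻¹) (1 - x⁻¹) + c (1 - y⁻¹) (1 - y⁻¹)
      + c ((1 - y) / (1 - x)) ((1 - y) / (1 - x))
      - c ((1 - y⁻¹) / (1 - x⁻¹)) ((1 - y⁻¹) / (1 - x⁻¹))
      + c (y / x) (y / x))
    = 0 :=
  stmt_13_general c hcmul h5 x y hx0 hx1 hy0 hy1 hxy ha10 ha20 ha30 ha40 ha50
end

section
/- For any seven pairwise distinct elements x1,...,x7 of a field F in general position, the expression Alt_7({r(x1,x2,x3,x4)}_2 wedge {r(x1,x5,x6,x7)}_2) maps under the coproduct delta(a wedge b) = a tensor delta_2(b) - b tensor delta_2(a) (with delta_2{z}_2 = (1-z) wedge z) to -42 times Alt_7({r(x2,x4,x5,x6)}_2 tensor |12| wedge |23|) in the symbolic model; equivalently, in the symbolic Bloch group model b2(2,7) one has delta(Alt_7({1,2,3,4}_2 wedge {1,5,6,7}_2)) = -42 Alt_7({2,4,5,6}_2 tensor |12| wedge |23|). -/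
open Equiv

/-- The wedge-expansion of `{i,j,k,l}₂ ⊗ δ₂{p,q,r,s}₂` in the symbolic model
`b₂(2,7) ⊗ Λ²b₁(2,7)`: here `F i j k l a b c d` stands for
`{i,j,k,l}₂ ⊗ (|ab| ∧ |cd|)`, and
`δ₂{p,q,r,s}₂ = (|pq|+|rs|-|ps|-|qr|) ∧ (|pr|+|qs|-|ps|-|qr|)`. -/
def wexp {M : Type*} [AddCommGroup M]
    (F : Fin 7 → Fin 7 → Fin 7 → Fin 7 → Fin 7 → Fin 7 → Fin 7 → Fin 7 → M)
    (i j k l p q r s : Fin 7) : M :=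
  (F i j k l p q p r + F i j k l p q q s - F i j k l p q p s - F i j k l p q q r)
  + (F i j k l r s p r + F i j k l r s q s - F i j k l r s p s - F i j k l r s q r)
  - (F i j k l p s p r + F i j k l p s q s - F i j k l p s p s - F i j k l p s q r)
  - (F i j k l q r p r + F i j k l q r q s - F i j k l q r p s - F i j k l q r q r)

/-- The alternating sum over `S₇` of `F` applied to a pattern of indices. -/
def alt7 {M : Type*} [AddCommGroup M]
    (F : Fin 7 → Fin 7 → Fin 7 → Fin 7 → Fin 7 → Fin 7 → Fin 7 → Fin 7 → M)
    (t0 t1 t2 t3 t4 t5 t6 t7 : Fin 7) : M :=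
  ∑ σ : Perm (Fin 7), (Perm.sign σ : ℤ) •
    F (σ t0) (σ t1) (σ t2) (σ t3) (σ t4) (σ t5) (σ t6) (σ t7)

lemma alt7_def {M : Type*} [AddCommGroup M]
    (F : Fin 7 → Fin 7 → Fin 7 → Fin 7 → Fin 7 → Fin 7 → Fin 7 → Fin 7 → M)
    (t0 t1 t2 t3 t4 t5 t6 t7 : Fin 7) :
    alt7 F t0 t1 t2 t3 t4 t5 t6 t7
      = ∑ σ : Perm (Fin 7), (Perm.sign σ : ℤ) •
          F (σ t0) (σ t1) (σ t2) (σ t3) (σ t4) (σ t5) (σ t6) (σ t7) := rfl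

lemma alt7_relabel {M : Type*} [AddCommGroup M]
    (F : Fin 7 → Fin 7 → Fin 7 → Fin 7 → Fin 7 → Fin 7 → Fin 7 → Fin 7 → M)
    (τ : Perm (Fin 7)) (t0 t1 t2 t3 t4 t5 t6 t7 : Fin 7) :
    alt7 F t0 t1 t2 t3 t4 t5 t6 t7
      = (Perm.sign τ : ℤ) •
          alt7 F (τ t0) (τ t1) (τ t2) (τ t3) (τ t4) (τ t5) (τ t6) (τ t7) := by
  unfold alt7
  rw [Finset.smul_sum]
  refine Fintype.sum_bijective (· * τ⁻¹) (Group.mulRight_bijective τ⁻¹) _ _ fun σ => ?_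
  simp only [Perm.mul_apply, Perm.coe_inv, symm_apply_apply, smul_smul]
  rcases Int.units_eq_one_or (Perm.sign τ) with hτ | hτ <;>
  rcases Int.units_eq_one_or (Perm.sign σ) with hσ | hσ <;>
  simp [map_mul, map_inv, hτ, hσ]

lemma alt7_relabel' {M : Type*} [AddCommGroup M]
    (F : Fin 7 → Fin 7 → Fin 7 → Fin 7 → Fin 7 → Fin 7 → Fin 7 → Fin 7 → M)
    (τ : Perm (Fin 7)) (s : ℤ) (t0 t1 t2 t3 t4 t5 t6 t7 u0 u1 u2 u3 u4 u5 u6 u7 : Fin 7)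
    (h0 : τ t0 = u0) (h1 : τ t1 = u1) (h2 : τ t2 = u2) (h3 : τ t3 = u3)
    (h4 : τ t4 = u4) (h5 : τ t5 = u5) (h6 : τ t6 = u6) (h7 : τ t7 = u7)
    (hs : (Perm.sign τ : ℤ) = s) :
    alt7 F t0 t1 t2 t3 t4 t5 t6 t7 = s • alt7 F u0 u1 u2 u3 u4 u5 u6 u7 := by
  rw [alt7_relabel F τ t0 t1 t2 t3 t4 t5 t6 t7, h0, h1, h2, h3, h4, h5, h6, h7, hs]

lemma alt7_sym₁ {M : Type*} [AddCommGroup M]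
    (F : Fin 7 → Fin 7 → Fin 7 → Fin 7 → Fin 7 → Fin 7 → Fin 7 → Fin 7 → M)
    (h : ∀ i j k l p q r s, F i j k l p q r s = F i j k l q p r s)
    (i j k l p q r s : Fin 7) :
    alt7 F i j k l p q r s = alt7 F i j k l q p r s :=
  Finset.sum_congr rfl fun σ _ => by
    rw [h (σ i) (σ j) (σ k) (σ l) (σ p) (σ q) (σ r) (σ s)]

lemma alt7_sym₂ {M : Type*} [AddCommGroup M]
    (F : Fin 7 → Fin 7 → Fin 7 → Fin 7 → Fin 7 → Fin 7 → Fin 7 → Fin 7 → M)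
    (h : ∀ i j k l p q r s, F i j k l p q r s = F i j k l p q s r)
    (i j k l p q r s : Fin 7) :
    alt7 F i j k l p q r s = alt7 F i j k l p q s r :=
  Finset.sum_congr rfl fun σ _ => by
    rw [h (σ i) (σ j) (σ k) (σ l) (σ p) (σ q) (σ r) (σ s)]

lemma alt7_anti {M : Type*} [AddCommGroup M]
    (F : Fin 7 → Fin 7 → Fin 7 → Fin 7 → Fin 7 → Fin 7 → Fin 7 → Fin 7 → M)
    (h : ∀ i j k l p q r s, F i j k l p q r s = - F i j k l r s p q)
    (i j k l p q r s : Fin 7) :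
    alt7 F i j k l p q r s = - alt7 F i j k l r s p q := by
  unfold alt7
  rw [← Finset.sum_neg_distrib]
  exact Finset.sum_congr rfl fun σ _ => by
    rw [h (σ i) (σ j) (σ k) (σ l) (σ p) (σ q) (σ r) (σ s), smul_neg]

lemma alt7_five {M : Type*} [AddCommGroup M]
    (F : Fin 7 → Fin 7 → Fin 7 → Fin 7 → Fin 7 → Fin 7 → Fin 7 → Fin 7 → M)
    (h5 : ∀ a b c d e p q r s : Fin 7, Function.Injective ![a, b, c, d, e] →
      F b c d e p q r s - F a c d e p q r s + F a b d e p q r s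
        - F a b c e p q r s + F a b c d p q r s = 0)
    (a b c d e p q r s : Fin 7) (hinj : Function.Injective ![a, b, c, d, e]) :
    alt7 F b c d e p q r s - alt7 F a c d e p q r s + alt7 F a b d e p q r s
      - alt7 F a b c e p q r s + alt7 F a b c d p q r s = 0 := by
  unfold alt7
  simp only [← Finset.sum_sub_distrib, ← Finset.sum_add_distrib]
  refine Finset.sum_eq_zero fun σ _ => ?_
  simp only [← smul_sub, ← smul_add]
  rw [h5 (σ a) (σ b) (σ c) (σ d) (σ e) (σ p) (σ q) (σ r) (σ s) ?_, smul_zero]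
  have hc : ![σ a, σ b, σ c, σ d, σ e] = ⇑σ ∘ ![a, b, c, d, e] := by
    funext i; fin_cases i <;> rfl
  rw [hc]
  exact σ.injective.comp hinj

lemma half_zero {M : Type*} [AddCommGroup M] [Module ℚ M] {x : M} (h : x = -x) : x = 0 := by
  have h2 : (2 : ℚ) • x = 0 := by
    rw [two_smul]
    nth_rewrite 1 [h]
    exact neg_add_cancel x
  rcases smul_eq_zero.mp h2 with h3 | h3
  · norm_num at h3
  · exact h3

lemma half_zero' {M : Type*} [AddCommGroup M] [Module ℚ M] {x : M}
    (h : x = (-1 : ℤ) • x) : x = 0 :=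
  half_zero (by rwa [neg_one_zsmul] at h)

/-- In the symbolic model `b₂(2,7) ⊗ Λ²b₁(2,7)` (modeled universally by a map
`F` satisfying skew-symmetry and the five-term relations in the `b₂`-slot, and
the symmetry/antisymmetry relations in the `Λ²b₁`-slot), the coproduct
`δ(a ∧ b) = a ⊗ δ₂(b) - b ⊗ δ₂(a)` sends
`Alt₇({1,2,3,4}₂ ∧ {1,5,6,7}₂)` to `-42·Alt₇({2,4,5,6}₂ ⊗ |12| ∧ |23|)`. -/
theorem stmt_16 {M : Type*} [AddCommGroup M] [Module ℚ M]
    (F : Fin 7 → Fin 7 → Fin 7 → Fin 7 → Fin 7 → Fin 7 → Fin 7 → Fin 7 → M)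
    (hskew₁ : ∀ i j k l p q r s, F i j k l p q r s = - F j i k l p q r s)
    (hskew₂ : ∀ i j k l p q r s, F i j k l p q r s = - F i k j l p q r s)
    (hskew₃ : ∀ i j k l p q r s, F i j k l p q r s = - F i j l k p q r s)
    (h5 : ∀ a b c d e p q r s : Fin 7, Function.Injective ![a, b, c, d, e] →
      F b c d e p q r s - F a c d e p q r s + F a b d e p q r s
        - F a b c e p q r s + F a b c d p q r s = 0)
    (hsym₁ : ∀ i j k l p q r s, F i j k l p q r s = F i j k l q p r s)
    (hsym₂ : ∀ i j k l p q r s, F i j k l p q r s = F i j k l p q s r)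
    (hanti : ∀ i j k l p q r s, F i j k l p q r s = - F i j k l r s p q) :
    ∑ σ : Perm (Fin 7), (Perm.sign σ : ℤ) •
      (wexp F (σ 0) (σ 1) (σ 2) (σ 3) (σ 0) (σ 4) (σ 5) (σ 6)
        - wexp F (σ 0) (σ 4) (σ 5) (σ 6) (σ 0) (σ 1) (σ 2) (σ 3))
    = (-42 : ℚ) • ∑ σ : Perm (Fin 7), (Perm.sign σ : ℤ) •
        F (σ 1) (σ 3) (σ 4) (σ 5) (σ 0) (σ 1) (σ 1) (σ 2) := by
  have e1 : alt7 F 0 1 2 3 0 4 4 6 = (-1:ℤ) • alt7 F 0 1 2 3 0 4 4 5 := by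
    rw [alt7_relabel' F (c[5, 6] : Equiv.Perm (Fin 7)) (-1) 0 1 2 3 0 4 4 6 0 1 2 3 0 4 4 5 (by decide) (by decide) (by decide) (by decide) (by decide) (by decide) (by decide) (by decide) (by decide)]
  have e2 : alt7 F 0 1 2 3 0 4 0 6 = (-1:ℤ) • alt7 F 0 1 2 3 0 4 0 5 := by
    rw [alt7_relabel' F (c[5, 6] : Equiv.Perm (Fin 7)) (-1) 0 1 2 3 0 4 0 6 0 1 2 3 0 4 0 5 (by decide) (by decide) (by decide) (by decide) (by decide) (by decide) (by decide) (by decide) (by decide)]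
  have e3 : alt7 F 0 1 2 3 5 6 0 5 = (-1:ℤ) • alt7 F 0 1 2 3 0 4 4 5 := by
    rw [alt7_relabel' F (c[4, 6, 5] : Equiv.Perm (Fin 7)) (1) 0 1 2 3 5 6 0 5 0 1 2 3 4 5 0 4 (by decide) (by decide) (by decide) (by decide) (by decide) (by decide) (by decide) (by decide) (by decide)]
    rw [alt7_anti F hanti 0 1 2 3 4 5 0 4]
    module
  have e4 : alt7 F 0 1 2 3 5 6 4 6 = (-1:ℤ) • alt7 F 0 1 2 3 4 5 4 6 := by
    rw [alt7_relabel' F (c[4, 6] : Equiv.Perm (Fin 7)) (-1) 0 1 2 3 5 6 4 6 0 1 2 3 5 4 6 4 (by decide) (by decide) (by decide) (by decide) (by decide) (by decide) (by decide) (by decide) (by decide)]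
    rw [alt7_sym₁ F hsym₁ 0 1 2 3 5 4 6 4]
    rw [alt7_sym₂ F hsym₂ 0 1 2 3 4 5 6 4]
  have e5 : alt7 F 0 1 2 3 5 6 0 6 = (1:ℤ) • alt7 F 0 1 2 3 0 4 4 5 := by
    rw [alt7_relabel' F (c[4, 6] : Equiv.Perm (Fin 7)) (-1) 0 1 2 3 5 6 0 6 0 1 2 3 5 4 0 4 (by decide) (by decide) (by decide) (by decide) (by decide) (by decide) (by decide) (by decide) (by decide)]
    rw [alt7_sym₁ F hsym₁ 0 1 2 3 5 4 0 4]
    rw [alt7_anti F hanti 0 1 2 3 4 5 0 4]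
    module
  have e6 : alt7 F 0 1 2 3 5 6 4 5 = (1:ℤ) • alt7 F 0 1 2 3 4 5 4 6 := by
    rw [alt7_relabel' F (c[4, 6, 5] : Equiv.Perm (Fin 7)) (1) 0 1 2 3 5 6 4 5 0 1 2 3 4 5 6 4 (by decide) (by decide) (by decide) (by decide) (by decide) (by decide) (by decide) (by decide) (by decide)]
    rw [alt7_sym₂ F hsym₂ 0 1 2 3 4 5 6 4]
  have e7 : alt7 F 0 1 2 3 0 6 0 5 = (-1:ℤ) • alt7 F 0 1 2 3 0 4 0 5 := by
    rw [alt7_relabel' F (c[4, 6] : Equiv.Perm (Fin 7)) (-1) 0 1 2 3 0 6 0 5 0 1 2 3 0 4 0 5 (by decide) (by decide) (by decide) (by decide) (by decide) (by decide) (by decide) (by decide) (by decide)]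
  have e8 : alt7 F 0 1 2 3 0 6 4 6 = (1:ℤ) • alt7 F 0 1 2 3 0 4 4 5 := by
    rw [alt7_relabel' F (c[4, 5, 6] : Equiv.Perm (Fin 7)) (1) 0 1 2 3 0 6 4 6 0 1 2 3 0 4 5 4 (by decide) (by decide) (by decide) (by decide) (by decide) (by decide) (by decide) (by decide) (by decide)]
    rw [alt7_sym₂ F hsym₂ 0 1 2 3 0 4 5 4]
  have e9 : alt7 F 0 1 2 3 0 6 0 6 = 0 := half_zero (alt7_anti F hanti 0 1 2 3 0 6 0 6)
  have e10 : alt7 F 0 1 2 3 0 6 4 5 = 0 := by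
    have h := alt7_relabel' F (c[4, 5] : Equiv.Perm (Fin 7)) (-1) 0 1 2 3 0 6 4 5 0 1 2 3 0 6 5 4 (by decide) (by decide) (by decide) (by decide) (by decide) (by decide) (by decide) (by decide) (by decide)
    rw [alt7_sym₂ F hsym₂ 0 1 2 3 0 6 5 4] at h
    exact half_zero' h
  have e11 : alt7 F 0 1 2 3 4 5 0 5 = (1:ℤ) • alt7 F 0 1 2 3 0 4 4 5 := by
    rw [alt7_relabel' F (c[4, 5] : Equiv.Perm (Fin 7)) (-1) 0 1 2 3 4 5 0 5 0 1 2 3 5 4 0 4 (by decide) (by decide) (by decide) (by decide) (by decide) (by decide) (by decide) (by decide) (by decide)]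
    rw [alt7_sym₁ F hsym₁ 0 1 2 3 5 4 0 4]
    rw [alt7_anti F hanti 0 1 2 3 4 5 0 4]
    module
  have e12 : alt7 F 0 1 2 3 4 5 0 6 = 0 := by
    have h := alt7_relabel' F (c[4, 5] : Equiv.Perm (Fin 7)) (-1) 0 1 2 3 4 5 0 6 0 1 2 3 5 4 0 6 (by decide) (by decide) (by decide) (by decide) (by decide) (by decide) (by decide) (by decide) (by decide)
    rw [alt7_sym₁ F hsym₁ 0 1 2 3 5 4 0 6] at h
    exact half_zero' h
  have e13 : alt7 F 0 1 2 3 4 5 4 5 = 0 := half_zero (alt7_anti F hanti 0 1 2 3 4 5 4 5)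
  have e14 : alt7 F 0 4 5 6 0 1 0 2 = (-1:ℤ) • alt7 F 0 1 2 3 0 4 0 5 := by
    rw [alt7_relabel' F (c[1, 4] * c[2, 5] * c[3, 6] : Equiv.Perm (Fin 7)) (-1) 0 4 5 6 0 1 0 2 0 1 2 3 0 4 0 5 (by decide) (by decide) (by decide) (by decide) (by decide) (by decide) (by decide) (by decide) (by decide)]
  have e15 : alt7 F 0 4 5 6 0 1 1 3 = (1:ℤ) • alt7 F 0 1 2 3 0 4 4 5 := by
    rw [alt7_relabel' F (c[1, 4] * c[2, 6, 3, 5] : Equiv.Perm (Fin 7)) (1) 0 4 5 6 0 1 1 3 0 1 2 3 0 4 4 5 (by decide) (by decide) (by decide) (by decide) (by decide) (by decide) (by decide) (by decide) (by decide)]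
  have e16 : alt7 F 0 4 5 6 0 1 0 3 = (1:ℤ) • alt7 F 0 1 2 3 0 4 0 5 := by
    rw [alt7_relabel' F (c[1, 4] * c[2, 6, 3, 5] : Equiv.Perm (Fin 7)) (1) 0 4 5 6 0 1 0 3 0 1 2 3 0 4 0 5 (by decide) (by decide) (by decide) (by decide) (by decide) (by decide) (by decide) (by decide) (by decide)]
  have e17 : alt7 F 0 4 5 6 0 1 1 2 = (-1:ℤ) • alt7 F 0 1 2 3 0 4 4 5 := by
    rw [alt7_relabel' F (c[1, 4] * c[2, 5] * c[3, 6] : Equiv.Perm (Fin 7)) (-1) 0 4 5 6 0 1 1 2 0 1 2 3 0 4 4 5 (by decide) (by decide) (by decide) (by decide) (by decide) (by decide) (by decide) (by decide) (by decide)]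
  have e18 : alt7 F 0 4 5 6 2 3 0 2 = (1:ℤ) • alt7 F 0 1 2 3 0 4 4 5 := by
    rw [alt7_relabel' F (c[1, 6, 3, 5, 2, 4] : Equiv.Perm (Fin 7)) (-1) 0 4 5 6 2 3 0 2 0 1 2 3 4 5 0 4 (by decide) (by decide) (by decide) (by decide) (by decide) (by decide) (by decide) (by decide) (by decide)]
    rw [alt7_anti F hanti 0 1 2 3 4 5 0 4]
    module
  have e19 : alt7 F 0 4 5 6 2 3 1 3 = (1:ℤ) • alt7 F 0 1 2 3 4 5 4 6 := by
    rw [alt7_relabel' F (c[1, 6, 3, 4] * c[2, 5] : Equiv.Perm (Fin 7)) (1) 0 4 5 6 2 3 1 3 0 1 2 3 5 4 6 4 (by decide) (by decide) (by decide) (by decide) (by decide) (by decide) (by decide) (by decide) (by decide)]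
    rw [alt7_sym₁ F hsym₁ 0 1 2 3 5 4 6 4]
    rw [alt7_sym₂ F hsym₂ 0 1 2 3 4 5 6 4]
  have e20 : alt7 F 0 4 5 6 2 3 0 3 = (-1:ℤ) • alt7 F 0 1 2 3 0 4 4 5 := by
    rw [alt7_relabel' F (c[1, 6, 3, 4] * c[2, 5] : Equiv.Perm (Fin 7)) (1) 0 4 5 6 2 3 0 3 0 1 2 3 5 4 0 4 (by decide) (by decide) (by decide) (by decide) (by decide) (by decide) (by decide) (by decide) (by decide)]
    rw [alt7_sym₁ F hsym₁ 0 1 2 3 5 4 0 4]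
    rw [alt7_anti F hanti 0 1 2 3 4 5 0 4]
    module
  have e21 : alt7 F 0 4 5 6 2 3 1 2 = (-1:ℤ) • alt7 F 0 1 2 3 4 5 4 6 := by
    rw [alt7_relabel' F (c[1, 6, 3, 5, 2, 4] : Equiv.Perm (Fin 7)) (-1) 0 4 5 6 2 3 1 2 0 1 2 3 4 5 6 4 (by decide) (by decide) (by decide) (by decide) (by decide) (by decide) (by decide) (by decide) (by decide)]
    rw [alt7_sym₂ F hsym₂ 0 1 2 3 4 5 6 4]
  have e22 : alt7 F 0 4 5 6 0 3 0 2 = (1:ℤ) • alt7 F 0 1 2 3 0 4 0 5 := by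
    rw [alt7_relabel' F (c[1, 6, 3, 4] * c[2, 5] : Equiv.Perm (Fin 7)) (1) 0 4 5 6 0 3 0 2 0 1 2 3 0 4 0 5 (by decide) (by decide) (by decide) (by decide) (by decide) (by decide) (by decide) (by decide) (by decide)]
  have e23 : alt7 F 0 4 5 6 0 3 1 3 = (-1:ℤ) • alt7 F 0 1 2 3 0 4 4 5 := by
    rw [alt7_relabel' F (c[1, 5, 2, 6, 3, 4] : Equiv.Perm (Fin 7)) (-1) 0 4 5 6 0 3 1 3 0 1 2 3 0 4 5 4 (by decide) (by decide) (by decide) (by decide) (by decide) (by decide) (by decide) (by decide) (by decide)]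
    rw [alt7_sym₂ F hsym₂ 0 1 2 3 0 4 5 4]
  have e24 : alt7 F 0 4 5 6 0 3 0 3 = 0 := half_zero (alt7_anti F hanti 0 4 5 6 0 3 0 3)
  have e25 : alt7 F 0 4 5 6 0 3 1 2 = 0 := by
    have h := alt7_relabel' F (c[1, 2] : Equiv.Perm (Fin 7)) (-1) 0 4 5 6 0 3 1 2 0 4 5 6 0 3 2 1 (by decide) (by decide) (by decide) (by decide) (by decide) (by decide) (by decide) (by decide) (by decide)
    rw [alt7_sym₂ F hsym₂ 0 4 5 6 0 3 2 1] at h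
    exact half_zero' h
  have e26 : alt7 F 0 4 5 6 1 2 0 2 = (-1:ℤ) • alt7 F 0 1 2 3 0 4 4 5 := by
    rw [alt7_relabel' F (c[1, 5, 2, 4] * c[3, 6] : Equiv.Perm (Fin 7)) (1) 0 4 5 6 1 2 0 2 0 1 2 3 5 4 0 4 (by decide) (by decide) (by decide) (by decide) (by decide) (by decide) (by decide) (by decide) (by decide)]
    rw [alt7_sym₁ F hsym₁ 0 1 2 3 5 4 0 4]
    rw [alt7_anti F hanti 0 1 2 3 4 5 0 4]
    module
  have e27 : alt7 F 0 4 5 6 1 2 1 3 = (-1:ℤ) • alt7 F 0 1 2 3 4 5 4 6 := by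
    rw [alt7_relabel' F (c[1, 4] * c[2, 5] * c[3, 6] : Equiv.Perm (Fin 7)) (-1) 0 4 5 6 1 2 1 3 0 1 2 3 4 5 4 6 (by decide) (by decide) (by decide) (by decide) (by decide) (by decide) (by decide) (by decide) (by decide)]
  have e28 : alt7 F 0 4 5 6 1 2 0 3 = 0 := by
    have h := alt7_relabel' F (c[1, 2] : Equiv.Perm (Fin 7)) (-1) 0 4 5 6 1 2 0 3 0 4 5 6 2 1 0 3 (by decide) (by decide) (by decide) (by decide) (by decide) (by decide) (by decide) (by decide) (by decide)
    rw [alt7_sym₁ F hsym₁ 0 4 5 6 2 1 0 3] at h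
    exact half_zero' h
  have e29 : alt7 F 0 4 5 6 1 2 1 2 = 0 := half_zero (alt7_anti F hanti 0 4 5 6 1 2 1 2)
  have e30 : alt7 F 1 3 4 5 0 1 1 2 = (-1:ℤ) • alt7 F 0 1 2 3 0 4 0 5 := by
    rw [alt7_relabel' F (c[0, 4, 2, 5, 3, 1] : Equiv.Perm (Fin 7)) (-1) 1 3 4 5 0 1 1 2 0 1 2 3 4 0 0 5 (by decide) (by decide) (by decide) (by decide) (by decide) (by decide) (by decide) (by decide) (by decide)]
    rw [alt7_sym₁ F hsym₁ 0 1 2 3 4 0 0 5]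
  have e31 : alt7 F 0 3 4 5 0 1 1 2 = (1:ℤ) • alt7 F 0 1 2 3 0 4 4 5 := by
    rw [alt7_relabel' F (c[1, 4, 2, 5, 3] : Equiv.Perm (Fin 7)) (1) 0 3 4 5 0 1 1 2 0 1 2 3 0 4 4 5 (by decide) (by decide) (by decide) (by decide) (by decide) (by decide) (by decide) (by decide) (by decide)]
  have e32 : alt7 F 0 1 4 5 0 1 1 2 = 0 := half_zero' (alt7_relabel' F (c[3, 6] : Equiv.Perm (Fin 7)) (-1) 0 1 4 5 0 1 1 2 0 1 4 5 0 1 1 2 (by decide) (by decide) (by decide) (by decide) (by decide) (by decide) (by decide) (by decide) (by decide))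
  have e33 : alt7 F 0 1 3 5 0 1 1 2 = 0 := half_zero' (alt7_relabel' F (c[4, 6] : Equiv.Perm (Fin 7)) (-1) 0 1 3 5 0 1 1 2 0 1 3 5 0 1 1 2 (by decide) (by decide) (by decide) (by decide) (by decide) (by decide) (by decide) (by decide) (by decide))
  have e34 : alt7 F 0 1 3 4 0 1 1 2 = 0 := half_zero' (alt7_relabel' F (c[5, 6] : Equiv.Perm (Fin 7)) (-1) 0 1 3 4 0 1 1 2 0 1 3 4 0 1 1 2 (by decide) (by decide) (by decide) (by decide) (by decide) (by decide) (by decide) (by decide) (by decide))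
  have e35 : alt7 F 3 4 5 6 0 1 1 2 = (-1:ℤ) • alt7 F 0 1 2 3 4 5 4 6 := by
    rw [alt7_relabel' F (c[0, 5, 2, 6, 3] * c[1, 4] : Equiv.Perm (Fin 7)) (-1) 3 4 5 6 0 1 1 2 0 1 2 3 5 4 4 6 (by decide) (by decide) (by decide) (by decide) (by decide) (by decide) (by decide) (by decide) (by decide)]
    rw [alt7_sym₁ F hsym₁ 0 1 2 3 5 4 4 6]
  have e36 : alt7 F 1 4 5 6 0 1 1 2 = (1:ℤ) • alt7 F 0 1 2 3 0 4 0 5 := by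
    rw [alt7_relabel' F (c[0, 4, 1] * c[2, 5] * c[3, 6] : Equiv.Perm (Fin 7)) (1) 1 4 5 6 0 1 1 2 0 1 2 3 4 0 0 5 (by decide) (by decide) (by decide) (by decide) (by decide) (by decide) (by decide) (by decide) (by decide)]
    rw [alt7_sym₁ F hsym₁ 0 1 2 3 4 0 0 5]
  have e37 : alt7 F 1 3 5 6 0 1 1 2 = (-1:ℤ) • alt7 F 0 1 2 3 0 4 0 5 := by
    rw [alt7_relabel' F (c[0, 4, 6, 3, 1] * c[2, 5] : Equiv.Perm (Fin 7)) (-1) 1 3 5 6 0 1 1 2 0 1 2 3 4 0 0 5 (by decide) (by decide) (by decide) (by decide) (by decide) (by decide) (by decide) (by decide) (by decide)]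
    rw [alt7_sym₁ F hsym₁ 0 1 2 3 4 0 0 5]
  have e38 : alt7 F 1 3 4 6 0 1 1 2 = (1:ℤ) • alt7 F 0 1 2 3 0 4 0 5 := by
    rw [alt7_relabel' F (c[0, 4, 2, 5, 6, 3, 1] : Equiv.Perm (Fin 7)) (1) 1 3 4 6 0 1 1 2 0 1 2 3 4 0 0 5 (by decide) (by decide) (by decide) (by decide) (by decide) (by decide) (by decide) (by decide) (by decide)]
    rw [alt7_sym₁ F hsym₁ 0 1 2 3 4 0 0 5]
  have ft1 := alt7_five F h5 0 1 3 4 5 0 1 1 2 (by decide)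
  have ft2 := alt7_five F h5 1 3 4 5 6 0 1 1 2 (by decide)
  rw [e30, e31, e32, e33, e34] at ft1
  rw [e35, e36, e37, e38, e30] at ft2
  simp only [wexp, smul_add, smul_sub, Finset.sum_add_distrib, Finset.sum_sub_distrib]
  simp only [← alt7_def F]
  rw [e1, e2, e3, e4, e5, e6, e7, e8, e9, e10, e11, e12, e13, e14, e15, e16, e17, e18, e19, e20, e21, e22, e23, e24, e25, e26, e27, e28, e29, e30]
  linear_combination (norm := module) (12:ℤ) • ft1 + (6:ℤ) • ft2
end
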